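/- ∫_{−∞}^{∞} e^{−2λ²} dλ = √(π/2); more generally, for a unitary endomorphism A of ℂ^c with A − I invertible, ∫_{ℝ^{2c}} e^{ψ₂(An, n)} dn = π^c / |det_ℂ(I − A^{-1})| · (phase), and in particular when combined with the Gaussian in λ one gets ∫∫ e^{ψ₂(An,n) − 2λ²} dλ dn = (1/√2)·π^{c+1/2}/D where D = det_ℂ(I − A^{−1}). -/

import Mathlib

open Complex Real MeasureTheory

noncomputable instance (c : ℕ) : MeasurableSpace (EuclideanSpace ℂ (Fin c)) :=
  borel _

instance (c : ℕ) : BorelSpace (EuclideanSpace ℂ (Fin c)) := ⟨rfl⟩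

/-- The universal exponent `ψ₂(v₁,v₂) = −iω(v₁,v₂) − ½‖v₁−v₂‖²`, where
`ω = −Im h`. -/
noncomputable def psi2 {V : Type*} [NormedAddCommGroup V]
    [InnerProductSpace ℂ V] (v₁ v₂ : V) : ℂ :=
  -I * ((-(inner ℂ v₁ v₂ : ℂ).im : ℝ) : ℂ) - (1 / 2 : ℂ) * ((‖v₁ - v₂‖ : ℂ)) ^ 2

/-!
A unitary `A` has an orthonormal eigenbasis `(bᵢ)` with eigenvalues `μᵢ` on the unit circle.
Since `‖A n‖ = ‖n‖`, the exponent is `ψ₂(A n, n) = ⟪A n - n, n⟫ = ∑ᵢ (conj μᵢ - 1) |nᵢ|²` in the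
coordinates `nᵢ` of `n` in that basis. As `1` is not an eigenvalue, `Re (conj μᵢ - 1) < 0`, and the
integral factors into complex Gaussians `∫_ℂ exp (ν |z|²) = π / -ν`; the product of the
`1 - conj μᵢ = 1 - μᵢ⁻¹` is `det (I - A⁻¹)`. The `λ`-integral is the real Gaussian `√(π/2)`,
which splits off as a constant factor.
-/

open scoped InnerProductSpace ComplexConjugate
open Module

theorem LinearMap.det_eq_prod_of_apply_eq_smul {R M ι : Type*} [CommRing R] [AddCommGroup M]
    [Module R M] [Fintype ι] [DecidableEq ι] (b : Basis ι R M) {f : M →ₗ[R] M} {d : ι → R}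
    (hf : ∀ i, f (b i) = d i • b i) : LinearMap.det f = ∏ i, d i := by
  have : f = Matrix.toLin b b (Matrix.diagonal d) :=
    b.ext fun i => by simp [hf, Matrix.toLin_self, Matrix.diagonal_apply]
  rw [this, LinearMap.det_toLin, Matrix.det_diagonal]

theorem LinearMap.det_id_sub_ne_zero {K V : Type*} [Field K] [AddCommGroup V] [Module K V]
    [FiniteDimensional K V] {f : V →ₗ[K] V} (hf : ∀ x, f x = x → x = 0) :
    LinearMap.det (LinearMap.id - f) ≠ 0 := by
  rw [Ne, LinearMap.det_eq_zero_iff_ker_ne_bot, not_not, LinearMap.ker_eq_bot']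
  exact fun x hx => hf x (sub_eq_zero.mp hx).symm

theorem OrthonormalBasis.inner_apply_self_eq_sum {E ι : Type*} [NormedAddCommGroup E]
    [InnerProductSpace ℂ E] [Fintype ι] (b : OrthonormalBasis ι ℂ E) {T : E →ₗ[ℂ] E}
    {d : ι → ℂ} (hT : ∀ i, T (b i) = d i • b i) (x : E) :
    ⟪T x, x⟫_ℂ = ∑ i, conj (d i) * normSq (b.repr x i) := by
  have hTx : T x = ∑ i, (d i * b.repr x i) • b i := by
    conv_lhs => rw [← b.sum_repr x]
    simp [hT, smul_smul, mul_comm]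
  rw [hTx, sum_inner]
  refine Finset.sum_congr rfl fun i _ => ?_
  rw [inner_smul_left, ← b.repr_apply_apply, normSq_eq_conj_mul_self, map_mul]
  ring

open scoped ComplexOrder in
theorem Complex.re_lt_one_of_norm_eq_one {z : ℂ} (hz : ‖z‖ = 1) (h1 : z ≠ 1) : z.re < 1 := by
  refine (hz ▸ re_le_norm z).lt_of_ne fun hre => h1 ?_
  have hz0 : 0 ≤ z := re_eq_norm.mp (hre.trans hz.symm)
  exact Complex.ext hre (by simpa using (nonneg_iff.mp hz0).2.symm)

namespace LinearIsometryEquiv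

variable {E : Type*} [NormedAddCommGroup E] [InnerProductSpace ℂ E]

theorem apply_mem_orthogonal_singleton (A : E ≃ₗᵢ[ℂ] E) {u x : E} {μ : ℂ}
    (hu : A u = μ • u) (hμ : μ ≠ 0) (hx : x ∈ (ℂ ∙ u)ᗮ) : A x ∈ (ℂ ∙ u)ᗮ := by
  rw [Submodule.mem_orthogonal_singleton_iff_inner_right] at hx ⊢
  have h := A.inner_map_map u x
  rw [hu, inner_smul_left, hx] at h
  exact (mul_eq_zero.mp h).resolve_left (by simpa using hμ)

theorem exists_orthonormal_eigenvectors_of_invariant [FiniteDimensional ℂ E] (A : E ≃ₗᵢ[ℂ] E)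
    (n : ℕ) (K : Submodule ℂ E) (hn : finrank ℂ K = n) (hK : ∀ x ∈ K, A x ∈ K) :
    ∃ v : Fin n → E, Orthonormal ℂ v ∧ (∀ i, v i ∈ K) ∧ ∀ i, ∃ μ : ℂ, A (v i) = μ • v i := by
  induction n generalizing K with
  | zero => exact ⟨![], Orthonormal.of_isEmpty _, finZeroElim, finZeroElim⟩
  | succ n ih =>
    have : Nontrivial K := Module.nontrivial_of_finrank_eq_succ hn
    obtain ⟨μ, hμ⟩ := Module.End.exists_eigenvalue ((A : E →ₗ[ℂ] E).restrict hK)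
    obtain ⟨w, hw⟩ := hμ.exists_hasEigenvector
    have hw0 : (w : E) ≠ 0 := by simpa using hw.2
    set u : E := ((‖(w : E)‖⁻¹ : ℝ) : ℂ) • (w : E)
    have hu1 : ‖u‖ = 1 := by simp [u, norm_smul, hw0]
    have hu0 : u ≠ 0 := ne_of_apply_ne norm (by simp [hu1])
    have huK : u ∈ K := K.smul_mem _ w.2
    have hAu : A u = μ • u := by
      have : A w = μ • (w : E) := congrArg Subtype.val hw.apply_eq_smul
      simp only [u, map_smul, this, smul_comm μ]
    have hμ0 : μ ≠ 0 := by
      rintro rfl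
      simpa [hu1] using congrArg norm hAu
    obtain ⟨v, hv, hvK, hvA⟩ := ih ((ℂ ∙ u)ᗮ ⊓ K)
      (Submodule.finrank_add_inf_finrank_orthogonal'
        ((Submodule.span_singleton_le_iff_mem u K).mpr huK)
        (by rw [finrank_span_singleton hu0, hn, add_comm]))
      fun x hx => ⟨A.apply_mem_orthogonal_singleton hAu hμ0 hx.1, hK x hx.2⟩
    refine ⟨Matrix.vecCons u v, ?_, Fin.cases huK fun i => (hvK i).2,
      Fin.cases ⟨μ, hAu⟩ hvA⟩
    rw [orthonormal_vecCons_iff]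
    exact ⟨hu1, fun i => Submodule.mem_orthogonal_singleton_iff_inner_right.mp (hvK i).1, hv⟩

theorem exists_orthonormalBasis_eigenvectors [FiniteDimensional ℂ E] (A : E ≃ₗᵢ[ℂ] E) :
    ∃ (b : OrthonormalBasis (Fin (finrank ℂ E)) ℂ E) (μ : Fin (finrank ℂ E) → ℂ),
      ∀ i, A (b i) = μ i • b i := by
  obtain ⟨v, hv, -, hvA⟩ :=
    A.exists_orthonormal_eigenvectors_of_invariant _ ⊤ (finrank_top ℂ E) fun _ _ => trivial
  choose μ hμ using hvA
  have hspan := hv.linearIndependent.span_eq_top_of_card_eq_finrank' (by simp)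
  exact ⟨OrthonormalBasis.mk hv hspan.ge, μ, by simpa [OrthonormalBasis.coe_mk] using hμ⟩

end LinearIsometryEquiv

theorem psi2_eq_inner_sub {V : Type*} [NormedAddCommGroup V] [InnerProductSpace ℂ V] {v₁ v₂ : V}
    (h : ‖v₁‖ = ‖v₂‖) : psi2 v₁ v₂ = ⟪v₁ - v₂, v₂⟫_ℂ := by
  have hsq : ‖v₁ - v₂‖ ^ 2 = 2 * ‖v₂‖ ^ 2 - 2 * (⟪v₁, v₂⟫_ℂ).re := by
    rw [@norm_sub_sq ℂ, h, RCLike.re_to_complex]; ring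
  rw [psi2, ← ofReal_pow, hsq, inner_sub_left, inner_self_eq_norm_sq_to_K]
  apply Complex.ext
  · simp; ring
  · simp

theorem integral_cexp_mul_normSq {ν : ℂ} (hν : ν.re < 0) :
    ∫ z : ℂ, cexp (ν * normSq z) = π / -ν := by
  have h := GaussianFourier.integral_cexp_neg_mul_sq_norm (V := ℂ) (b := -ν) (by simpa using hν)
  simp only [neg_neg, Complex.finrank_real_complex, Nat.cast_ofNat, div_self (two_ne_zero' ℂ),
    cpow_one] at h
  simpa [Complex.normSq_eq_norm_sq] using h

theorem integral_cexp_sum_mul_normSq_pi {ι : Type*} [Fintype ι] {ν : ι → ℂ}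
    (hν : ∀ i, (ν i).re < 0) :
    ∫ z : ι → ℂ, cexp (∑ i, ν i * normSq (z i)) = ∏ i, π / -ν i := by
  simp_rw [Complex.exp_sum]
  rw [integral_fintype_prod_volume_eq_prod (fun i z => cexp (ν i * normSq z))]
  exact Finset.prod_congr rfl fun i _ => integral_cexp_mul_normSq (hν i)

theorem PiLp.volume_preserving_ofLp_complex (ι : Type*) [Fintype ι] :
    MeasurePreserving (@WithLp.ofLp 2 (ι → ℂ)) := by
  refine ⟨WithLp.measurable_ofLp 2 _, ?_⟩
  -- Both sides are Haar measures on `ι → ℂ`; integrating `exp (-‖x‖²)` both ways shows that the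
  -- scalar factor between them is `1`.
  have : (volume.map (@WithLp.ofLp 2 (ι → ℂ))).IsAddHaarMeasure :=
    (PiLp.continuousLinearEquiv 2 ℝ (fun _ : ι => ℂ)).isAddHaarMeasure_map volume
  have hC := Measure.isAddLeftInvariant_eq_smul (volume.map (@WithLp.ofLp 2 (ι → ℂ))) volume
  set C := Measure.addHaarScalarFactor (volume.map (@WithLp.ofLp 2 (ι → ℂ))) volume
  suffices C = 1 by rw [hC, this, one_smul]
  let g : (ι → ℂ) → ℂ := fun z => cexp (∑ i, (-1 : ℂ) * normSq (z i))
  have hg : ∫ z, g z = π ^ Fintype.card ι := by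
    rw [integral_cexp_sum_mul_normSq_pi fun _ => by simp]
    simp
  have hgE : ∫ x : EuclideanSpace ℂ ι, g x = π ^ Fintype.card ι := by
    have h := GaussianFourier.integral_cexp_neg_mul_sq_norm (V := EuclideanSpace ℂ ι) (b := 1)
      (by simp)
    rw [finrank_real_of_complex, finrank_euclideanSpace] at h
    push_cast at h
    rw [mul_div_cancel_left₀ _ two_ne_zero, cpow_natCast, div_one] at h
    rw [← h]
    congr with x
    rw [← ofReal_pow, EuclideanSpace.norm_sq_eq]
    simp [g, Complex.normSq_eq_norm_sq]
  have hmap : ∫ z, g z ∂(volume.map (@WithLp.ofLp 2 (ι → ℂ))) = ∫ x : EuclideanSpace ℂ ι, g x :=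
    (MeasurableEquiv.toLp 2 (ι → ℂ)).symm.measurableEmbedding.integral_map g
  rw [hC, integral_smul_nnreal_measure, hg, hgE, NNReal.smul_def, real_smul] at hmap
  have hπ : (π : ℂ) ^ Fintype.card ι ≠ 0 := pow_ne_zero _ (by exact_mod_cast pi_ne_zero)
  exact_mod_cast mul_right_cancel₀ hπ (hmap.trans (one_mul _).symm)

theorem OrthonormalBasis.integral_cexp_sum_mul_normSq_repr {E ι : Type*} [NormedAddCommGroup E]
    [InnerProductSpace ℂ E] [InnerProductSpace ℝ E] [IsScalarTower ℝ ℂ E] [FiniteDimensional ℝ E]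
    [MeasurableSpace E] [BorelSpace E] [Fintype ι] (b : OrthonormalBasis ι ℂ E) {ν : ι → ℂ}
    (hν : ∀ i, (ν i).re < 0) :
    ∫ x : E, cexp (∑ i, ν i * normSq (b.repr x i)) = ∏ i, π / -ν i := by
  let e : E ≃ₗᵢ[ℝ] EuclideanSpace ℂ ι :=
    { b.repr.toLinearEquiv.restrictScalars ℝ with norm_map' := b.repr.norm_map }
  rw [← integral_cexp_sum_mul_normSq_pi hν,
    ← (PiLp.volume_preserving_ofLp_complex ι).integral_comp
      (MeasurableEquiv.toLp 2 (ι → ℂ)).symm.measurableEmbedding]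
  exact e.measurePreserving.integral_comp' (f := e.toMeasurableEquiv)
    (fun y : EuclideanSpace ℂ ι => cexp (∑ i, ν i * normSq (y i)))

theorem integral_cexp_sub_two_mul_sq (z : ℂ) :
    ∫ l : ℝ, cexp (z - 2 * (l : ℂ) ^ 2) = cexp z * √(π / 2) := by
  have h : ∀ l : ℝ, cexp (z - 2 * (l : ℂ) ^ 2) = cexp z * (rexp (-2 * l ^ 2) : ℝ) := by
    intro l
    push_cast
    rw [← Complex.exp_add]
    ring_nf
  simp_rw [h]
  rw [integral_const_mul, integral_complex_ofReal, integral_gaussian]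

theorem integral_cexp_psi2_apply_self {E : Type*} [NormedAddCommGroup E] [InnerProductSpace ℂ E]
    [FiniteDimensional ℂ E] [InnerProductSpace ℝ E] [IsScalarTower ℝ ℂ E] [FiniteDimensional ℝ E]
    [MeasurableSpace E] [BorelSpace E] (A : E ≃ₗᵢ[ℂ] E) (hA : ∀ x, A x = x → x = 0) :
    ∫ x : E, cexp (psi2 (A x) x) =
      π ^ finrank ℂ E / LinearMap.det (LinearMap.id - A.symm.toLinearEquiv.toLinearMap) := by
  obtain ⟨b, μ, hb⟩ := A.exists_orthonormalBasis_eigenvectors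
  have hμ_norm : ∀ i, ‖μ i‖ = 1 := fun i => by
    simpa [hb, norm_smul, b.orthonormal.1 i] using A.norm_map (b i)
  have hμ_ne : ∀ i, μ i ≠ 1 := fun i h =>
    b.orthonormal.ne_zero i (hA _ (by rw [hb, h, one_smul]))
  have hdet : LinearMap.det (LinearMap.id - A.symm.toLinearEquiv.toLinearMap) =
      ∏ i, (1 - conj (μ i)) := by
    refine LinearMap.det_eq_prod_of_apply_eq_smul b.toBasis fun i => ?_
    have : A.symm (b i) = (μ i)⁻¹ • b i := by
      rw [A.symm_apply_eq, map_smul, hb, smul_smul,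
        inv_mul_cancel₀ (norm_ne_zero_iff.mp (by simp [hμ_norm])), one_smul]
    simp [this, sub_smul, ← inv_eq_conj (hμ_norm i)]
  have hψ : ∀ x, psi2 (A x) x = ∑ i, (conj (μ i) - 1) * normSq (b.repr x i) := fun x => by
    have h := b.inner_apply_self_eq_sum (T := A.toLinearEquiv.toLinearMap - LinearMap.id)
      (d := fun i => μ i - 1) (fun i => by simp [hb, sub_smul]) x
    simp only [map_sub, map_one] at h
    rw [psi2_eq_inner_sub (A.norm_map x), ← h]
    rfl
  simp_rw [hψ]
  rw [b.integral_cexp_sum_mul_normSq_repr fun i => by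
      simpa using Complex.re_lt_one_of_norm_eq_one (hμ_norm i) (hμ_ne i),
    hdet, Finset.prod_div_distrib, Finset.prod_const, Finset.card_univ, Fintype.card_fin]
  simp [neg_sub]

/-- The one-dimensional Gaussian `∫ e^{−2λ²} dλ = √(π/2)`; the complex
Gaussian `∫ e^{ψ₂(An,n)} dn = πᶜ/|det(I − A⁻¹)| · (phase)`; and the combined
integral `∫∫ e^{ψ₂(An,n) − 2λ²} dλ dn = (1/√2) π^{c+1/2} / D` with
`D = det_ℂ(I − A⁻¹)`. -/
theorem stmt_15 (c : ℕ)
    (A : EuclideanSpace ℂ (Fin c) ≃ₗᵢ[ℂ] EuclideanSpace ℂ (Fin c))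
    (hinv : Function.Bijective fun n : EuclideanSpace ℂ (Fin c) => A n - n) :
    let D : ℂ := LinearMap.det
      ((LinearMap.id : EuclideanSpace ℂ (Fin c) →ₗ[ℂ] EuclideanSpace ℂ (Fin c))
        - A.symm.toLinearEquiv.toLinearMap)
    (∫ l : ℝ, Real.exp (-2 * l ^ 2)) = Real.sqrt (π / 2) ∧
    (∃ phase : ℂ, ‖phase‖ = 1 ∧
      (∫ n : EuclideanSpace ℂ (Fin c), Complex.exp (psi2 (A n) n))
        = ((π ^ c / ‖D‖ : ℝ) : ℂ) * phase) ∧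
    (∫ n : EuclideanSpace ℂ (Fin c), ∫ l : ℝ,
        Complex.exp (psi2 (A n) n - 2 * (l : ℂ) ^ 2))
      = (((1 / Real.sqrt 2) * π ^ ((c : ℝ) + 1 / 2) : ℝ) : ℂ) / D := by
  intro D
  have hA : ∀ n, A n = n → n = 0 := fun n h => hinv.1 (by simp [h])
  have hD : D ≠ 0 := LinearMap.det_id_sub_ne_zero fun x hx => hA x (A.symm_apply_eq.mp hx).symm
  have hI : ∫ n, cexp (psi2 (A n) n) = π ^ c / D := by
    rw [integral_cexp_psi2_apply_self A hA, finrank_euclideanSpace_fin]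
  refine ⟨integral_gaussian 2, ⟨‖D‖ / D, ?_, ?_⟩, ?_⟩
  · rw [norm_div, Complex.norm_real, norm_norm, div_self (norm_ne_zero_iff.mpr hD)]
  · have hD' : (‖D‖ : ℂ) ≠ 0 := by exact_mod_cast norm_ne_zero_iff.mpr hD
    rw [hI]
    push_cast
    field_simp
  · simp_rw [integral_cexp_sub_two_mul_sq, integral_mul_const, hI]
    rw [rpow_add pi_pos, rpow_natCast, ← sqrt_eq_rpow, sqrt_div' _ zero_le_two]
    push_cast
    ring
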